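/- Let $\lambda > -1/2$, let $m \ge 1$ and $n_q \ge 1$ be integers with $n_q$ sufficiently large (e.g., $n_q \ge 2\lambda + 2m$). Then the function $E(j) = j^{-2\lambda-2m+1}\,(j-m-n_q)^{-j+m+n_q+\frac12}\,(j+n_q)^{j+2\lambda+m+n_q+\frac12}$ is strictly increasing in $j$ on the real interval $j \ge m+n_q+1$. -/
import Mathlib


open Real

/-- For `λ > -1/2`, integers `m ≥ 1` and `n_q ≥ 1` sufficiently large
(`n_q ≥ 2λ + 2m`), the function
`E(j) = j^{-2λ-2m+1} (j-m-n_q)^{-j+m+n_q+1/2} (j+n_q)^{j+2λ+m+n_q+1/2}`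
is strictly increasing on the real interval `j ≥ m + n_q + 1`. -/
theorem E_strictMonoOn (lam : ℝ) (hlam : -1/2 < lam)
    (m nq : ℕ) (hm : 1 ≤ m) (hnq : 1 ≤ nq)
    (hlarge : 2 * lam + 2 * m ≤ (nq : ℝ)) :
    StrictMonoOn
      (fun j : ℝ =>
        j ^ (-2 * lam - 2 * m + 1) *
          (j - m - nq) ^ (-j + m + nq + 1/2) *
          (j + nq) ^ (j + 2 * lam + m + nq + 1/2))
      (Set.Ici ((m : ℝ) + nq + 1)) := by
  have hm1 : (1:ℝ) ≤ (m:ℝ) := by exact_mod_cast hm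
  have hnq1 : (1:ℝ) ≤ (nq:ℝ) := by exact_mod_cast hnq
  set c : ℝ := (m:ℝ) + nq + 1 with hc
  set f : ℝ → ℝ := fun j =>
    (-2 * lam - 2 * m + 1) * Real.log j +
      (-j + m + nq + 1/2) * Real.log (j - m - nq) +
      (j + 2 * lam + m + nq + 1/2) * Real.log (j + nq) with hf
  -- derivative of f at every point with j - m - nq > 0
  have hder : ∀ j : ℝ, c ≤ j → HasDerivAt f
      ((-2 * lam - 2 * m + 1) * j⁻¹ +
        ((-1) * Real.log (j - m - nq) + (-j + m + nq + 1/2) * ((1:ℝ) / (j - m - nq))) +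
        ((1:ℝ) * Real.log (j + nq) + (j + 2 * lam + m + nq + 1/2) * ((1:ℝ) / (j + nq)))) j := by
    intro j hj
    have hj0 : (0:ℝ) < j := by linarith
    have ha0 : (0:ℝ) < j - m - nq := by linarith
    have hb0 : (0:ℝ) < j + nq := by linarith
    have h1 : HasDerivAt (fun j : ℝ => (-2 * lam - 2 * m + 1) * Real.log j)
        ((-2 * lam - 2 * m + 1) * j⁻¹) j :=
      (Real.hasDerivAt_log hj0.ne').const_mul _
    have hu : HasDerivAt (fun j : ℝ => -j + m + nq + 1/2) (-1) j := by
      simpa [add_assoc] using ((hasDerivAt_id j).neg.add_const ((m:ℝ) + nq + 1/2))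
    have hla : HasDerivAt (fun j : ℝ => Real.log (j - m - nq)) ((1:ℝ) / (j - m - nq)) j := by
      have := ((hasDerivAt_id j).sub_const ((m:ℝ) + nq)).log (by simpa [sub_sub] using ha0.ne')
      simpa [sub_sub] using this
    have hv : HasDerivAt (fun j : ℝ => j + 2 * lam + m + nq + 1/2) 1 j := by
      simpa [add_assoc] using ((hasDerivAt_id j).add_const (2 * lam + (m:ℝ) + nq + 1/2))
    have hlb : HasDerivAt (fun j : ℝ => Real.log (j + nq)) ((1:ℝ) / (j + nq)) j := by
      have := ((hasDerivAt_id j).add_const ((nq:ℝ))).log hb0.ne'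
      simpa using this
    have h2 := hu.mul hla
    have h3 := hv.mul hlb
    have := (h1.add h2).add h3
    exact this
  -- positivity of the derivative on the interior
  have hpos : ∀ j : ℝ, c < j →
      0 < (-2 * lam - 2 * m + 1) * j⁻¹ +
        ((-1) * Real.log (j - m - nq) + (-j + m + nq + 1/2) * ((1:ℝ) / (j - m - nq))) +
        ((1:ℝ) * Real.log (j + nq) + (j + 2 * lam + m + nq + 1/2) * ((1:ℝ) / (j + nq))) := by
    intro j hj
    have hj0 : (0:ℝ) < j := by linarith
    have ha0 : (0:ℝ) < j - m - nq := by linarith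
    have hb0 : (0:ℝ) < j + nq := by linarith
    set a := j - m - nq with hadef
    set b := j + nq with hbdef
    have hlog : 1 - a / b ≤ Real.log b - Real.log a := by
      have h := Real.log_le_sub_one_of_pos (div_pos ha0 hb0)
      rw [Real.log_div ha0.ne' hb0.ne'] at h
      linarith
    have hkey : (2 * lam + 2 * m - 1) / j ≤ (2 * lam + 2 * m + 2 * nq + 1/2) / b := by
      rw [div_le_div_iff₀ hj0 hb0]
      have hjnq : (nq:ℝ) ≤ j := by linarith
      nlinarith [mul_nonneg (sub_nonneg.2 hjnq) (by linarith : (0:ℝ) ≤ 2 * nq + 3/2),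
        mul_nonneg (by linarith : (0:ℝ) ≤ (nq:ℝ)) (by linarith : (0:ℝ) ≤ 2 * nq + 5/2 - (2*lam + 2*m))]
    have hhalf : 0 < 1 / (2 * a) := by positivity
    have heq : (-2 * lam - 2 * m + 1) * j⁻¹ +
        ((-1) * Real.log a + (-j + m + nq + 1/2) * ((1:ℝ) / a)) +
        ((1:ℝ) * Real.log b + (j + 2 * lam + m + nq + 1/2) * ((1:ℝ) / b))
        = (Real.log b - Real.log a) + 1 / (2 * a) +
          ((2 * lam + 2 * m + 2 * nq + 1/2) / b - (2 * lam + 2 * m - 1) / j) - (1 - a/b) := by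
      field_simp
      ring
    rw [heq]
    have : (0:ℝ) ≤ (2 * lam + 2 * m + 2 * nq + 1/2) / b - (2 * lam + 2 * m - 1) / j :=
      sub_nonneg.2 hkey
    linarith
  have hmono : StrictMonoOn f (Set.Ici c) := by
    apply strictMonoOn_of_deriv_pos (convex_Ici c)
    · intro x hx
      exact (hder x hx).differentiableAt.continuousAt.continuousWithinAt
    · intro x hx
      rw [interior_Ici] at hx
      rw [(hder x (le_of_lt hx)).deriv]
      exact hpos x hx
  -- rewrite E as exp ∘ f
  have hE : ∀ x ∈ Set.Ici c,
      x ^ (-2 * lam - 2 * m + 1) *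
        (x - m - nq) ^ (-x + m + nq + 1/2) *
        (x + nq) ^ (x + 2 * lam + m + nq + 1/2) = Real.exp (f x) := by
    intro x hx
    have hx0 : (0:ℝ) < x := by simp only [Set.mem_Ici] at hx; linarith
    have ha0 : (0:ℝ) < x - m - nq := by simp only [Set.mem_Ici] at hx; linarith
    have hb0 : (0:ℝ) < x + nq := by simp only [Set.mem_Ici] at hx; linarith
    rw [Real.rpow_def_of_pos hx0, Real.rpow_def_of_pos ha0, Real.rpow_def_of_pos hb0,
      ← Real.exp_add, ← Real.exp_add]
    congr 1
    simp only [hf]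
    ring
  intro x hx y hy hxy
  simp only
  rw [hE x hx, hE y hy]
  exact Real.exp_lt_exp.2 (hmono hx hy hxy)
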